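/- Fix d ≥ 1 and vectors σ, λ ∈ ℝ^d with strictly positive entries. For δ > 0 define x_i(δ) = σ_i·√(λ_i(λ_i + δ)), h_i(δ) = 1/(λ_i + δ), D_i(δ) = (λ_i³ + 2δλ_i² + (δ+δ²)λ_i)/(λ_i² + δλ_i), γ_SGD(δ) = (Σ x_i² h_i)/(Σ x_i²), γ_Muon(δ) = (Σ x_i h_i)/(Σ x_i), Φ_SGD(δ) = (Σ x_i²)²/(Σ x_i² D_i), Φ_Muon(δ) = (Σ x_i)²/(Σ D_i). Then as δ → ∞: δ²·γ_SGD(δ)²·Φ_SGD(δ) → Σ_i σ_i² λ_i and δ²·γ_Muon(δ)²·Φ_Muon(δ) → (Σ_i σ_i √λ_i)²/d; in particular, lim_{δ→∞} δ²·γ_Muon(δ)²·Φ_Muon(δ) ≤ lim_{δ→∞} δ²·γ_SGD(δ)²·Φ_SGD(δ). -/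

import Mathlib

/-!
Since `x_i² h_i = σ_i² λ_i` and `D_i = (λ_i + δ) + δ / (λ_i + δ)`, both products `γ² Φ` collapse to
a square of a sum over a sum, and after scaling by `δ²` and substituting `t = δ⁻¹` each becomes a
ratio of functions of `t` that are continuous at `t = 0`, where they take the values
`(∑ σ_i² λ_i)² / ∑ σ_i² λ_i` and `(∑ σ_i √λ_i)² / d`. The comparison of the limits is
Cauchy–Schwarz against the constant vector `1`.
-/

open scoped BigOperators
open Filter

/-- `x_i(δ) = σ_i √(λ_i (λ_i + δ))`. -/
noncomputable def xv {d : ℕ} (σ lam : Fin d → ℝ) (δ : ℝ) (i : Fin d) : ℝ :=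
  σ i * Real.sqrt (lam i * (lam i + δ))

/-- `h_i(δ) = 1 / (λ_i + δ)`. -/
noncomputable def hv {d : ℕ} (lam : Fin d → ℝ) (δ : ℝ) (i : Fin d) : ℝ :=
  1 / (lam i + δ)

/-- `D_i(δ) = (λ_i³ + 2δλ_i² + (δ + δ²)λ_i) / (λ_i² + δλ_i)`. -/
noncomputable def Dv {d : ℕ} (lam : Fin d → ℝ) (δ : ℝ) (i : Fin d) : ℝ :=
  (lam i ^ 3 + 2 * δ * lam i ^ 2 + (δ + δ ^ 2) * lam i) / (lam i ^ 2 + δ * lam i)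

/-- `γ_SGD(δ) = (∑ x_i² h_i) / (∑ x_i²)`. -/
noncomputable def gammaSGD {d : ℕ} (σ lam : Fin d → ℝ) (δ : ℝ) : ℝ :=
  (∑ i, (xv σ lam δ i) ^ 2 * hv lam δ i) / ∑ i, (xv σ lam δ i) ^ 2

/-- `γ_Muon(δ) = (∑ x_i h_i) / (∑ x_i)`. -/
noncomputable def gammaMuon {d : ℕ} (σ lam : Fin d → ℝ) (δ : ℝ) : ℝ :=
  (∑ i, xv σ lam δ i * hv lam δ i) / ∑ i, xv σ lam δ i

/-- `Φ_SGD(δ) = (∑ x_i²)² / (∑ x_i² D_i)`. -/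
noncomputable def PhiSGD {d : ℕ} (σ lam : Fin d → ℝ) (δ : ℝ) : ℝ :=
  (∑ i, (xv σ lam δ i) ^ 2) ^ 2 / ∑ i, (xv σ lam δ i) ^ 2 * Dv lam δ i

/-- `Φ_Muon(δ) = (∑ x_i)² / (∑ D_i)`. -/
noncomputable def PhiMuon {d : ℕ} (σ lam : Fin d → ℝ) (δ : ℝ) : ℝ :=
  (∑ i, xv σ lam δ i) ^ 2 / ∑ i, Dv lam δ i

open Real

section Coordinates

variable {d : ℕ} {σ lam : Fin d → ℝ} {δ : ℝ} {i : Fin d}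

lemma xv_sq (hl : 0 ≤ lam i) (hδ : 0 ≤ δ) :
    xv σ lam δ i ^ 2 = σ i ^ 2 * (lam i * (lam i + δ)) := by
  rw [xv, mul_pow, sq_sqrt (by positivity)]

lemma xv_sq_mul_hv (hl : 0 ≤ lam i) (hδ : 0 < δ) :
    xv σ lam δ i ^ 2 * hv lam δ i = σ i ^ 2 * lam i := by
  rw [xv_sq hl hδ.le, hv]
  field_simp

lemma xv_sq_mul_Dv (hl : 0 < lam i) (hδ : 0 < δ) :
    xv σ lam δ i ^ 2 * Dv lam δ i
      = δ ^ 2 * (σ i ^ 2 * lam i * ((lam i * δ⁻¹ + 1) ^ 2 + δ⁻¹)) := by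
  rw [xv_sq hl.le hδ.le, Dv]
  field_simp
  ring

lemma xv_mul_hv (hl : 0 ≤ lam i) (hδ : 0 < δ) :
    xv σ lam δ i * hv lam δ i = √δ⁻¹ * (σ i * √(lam i) / √(lam i * δ⁻¹ + 1)) := by
  have hsum : lam i * δ⁻¹ + 1 = (lam i + δ) * δ⁻¹ := by field_simp
  have hroot : √(lam i + δ) ^ 2 = lam i + δ := sq_sqrt (by positivity)
  rw [xv, hv, sqrt_mul hl, hsum, sqrt_mul (by positivity), ← hroot]
  field_simp
  rw [sqrt_sq (by positivity)]

lemma Dv_eq (hl : 0 < lam i) (hδ : 0 < δ) :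
    Dv lam δ i = δ * (lam i * δ⁻¹ + 1 + δ⁻¹ / (lam i * δ⁻¹ + 1)) := by
  rw [Dv]
  field_simp
  ring

end Coordinates

lemma div_sq_mul_sq_div {a s t : ℝ} (hs : s ≠ 0) : (a / s) ^ 2 * (s ^ 2 / t) = a ^ 2 / t := by
  field_simp

section Limits

open Finset Topology

variable {d : ℕ} [NeZero d] {σ lam : Fin d → ℝ} {δ : ℝ}

lemma sq_mul_gammaSGD_sq_mul_PhiSGD (hσ : ∀ i, σ i ≠ 0) (hl : ∀ i, 0 < lam i) (hδ : 0 < δ) :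
    δ ^ 2 * gammaSGD σ lam δ ^ 2 * PhiSGD σ lam δ
      = (∑ i, σ i ^ 2 * lam i) ^ 2
          / ∑ i, σ i ^ 2 * lam i * ((lam i * δ⁻¹ + 1) ^ 2 + δ⁻¹) := by
  have hS : ∑ i, xv σ lam δ i ^ 2 ≠ 0 := by
    refine (sum_pos (fun i _ => ?_) univ_nonempty).ne'
    rw [xv_sq (hl i).le hδ.le]
    have := hσ i; have := hl i; positivity
  rw [gammaSGD, PhiSGD, mul_assoc, div_sq_mul_sq_div hS,
    sum_congr rfl fun i _ => xv_sq_mul_hv (σ := σ) (hl i).le hδ,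
    sum_congr rfl fun i _ => xv_sq_mul_Dv (σ := σ) (hl i) hδ, ← mul_sum, ← mul_div_assoc,
    mul_div_mul_left _ _ (by positivity)]

lemma sq_mul_gammaMuon_sq_mul_PhiMuon (hσ : ∀ i, 0 < σ i) (hl : ∀ i, 0 < lam i) (hδ : 0 < δ) :
    δ ^ 2 * gammaMuon σ lam δ ^ 2 * PhiMuon σ lam δ
      = (∑ i, σ i * √(lam i) / √(lam i * δ⁻¹ + 1)) ^ 2
          / ∑ i, (lam i * δ⁻¹ + 1 + δ⁻¹ / (lam i * δ⁻¹ + 1)) := by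
  have hX : ∑ i, xv σ lam δ i ≠ 0 := by
    refine (sum_pos (fun i _ => ?_) univ_nonempty).ne'
    rw [xv]
    have := hσ i; have := hl i; positivity
  rw [gammaMuon, PhiMuon, mul_assoc, div_sq_mul_sq_div hX,
    sum_congr rfl fun i _ => xv_mul_hv (σ := σ) (hl i).le hδ,
    sum_congr rfl fun i _ => Dv_eq (hl i) hδ, ← mul_sum, ← mul_sum, mul_pow,
    sq_sqrt (by positivity)]
  field_simp

theorem tendsto_sq_mul_gammaSGD_sq_mul_PhiSGD (hσ : ∀ i, σ i ≠ 0) (hl : ∀ i, 0 < lam i) :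
    Tendsto (fun δ => δ ^ 2 * gammaSGD σ lam δ ^ 2 * PhiSGD σ lam δ) atTop
      (𝓝 (∑ i, σ i ^ 2 * lam i)) := by
  set A := ∑ i, σ i ^ 2 * lam i
  have hA : A ≠ 0 := (sum_pos (fun i _ => by have := hσ i; have := hl i; positivity)
    univ_nonempty).ne'
  have hden : Tendsto (fun t => ∑ i, σ i ^ 2 * lam i * ((lam i * t + 1) ^ 2 + t)) (𝓝 0)
      (𝓝 A) := by
    simpa using (show Continuous fun t => ∑ i, σ i ^ 2 * lam i * ((lam i * t + 1) ^ 2 + t) by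
      fun_prop).tendsto 0
  have hlim := tendsto_const_nhds (x := A ^ 2) |>.div (hden.comp tendsto_inv_atTop_zero) hA
  rw [show A ^ 2 / A = A by field_simp] at hlim
  exact hlim.congr' <| (eventually_gt_atTop 0).mono fun δ hδ =>
    (sq_mul_gammaSGD_sq_mul_PhiSGD hσ hl hδ).symm

theorem tendsto_sq_mul_gammaMuon_sq_mul_PhiMuon (hσ : ∀ i, 0 < σ i) (hl : ∀ i, 0 < lam i) :
    Tendsto (fun δ => δ ^ 2 * gammaMuon σ lam δ ^ 2 * PhiMuon σ lam δ) atTop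
      (𝓝 ((∑ i, σ i * √(lam i)) ^ 2 / d)) := by
  have hnum : Tendsto (fun t => ∑ i, σ i * √(lam i) / √(lam i * t + 1)) (𝓝 0)
      (𝓝 (∑ i, σ i * √(lam i))) := by
    simpa using tendsto_finsetSum univ fun i _ =>
      (show ContinuousAt (fun t => σ i * √(lam i) / √(lam i * t + 1)) 0 by
        fun_prop (disch := simp)).tendsto
  have hden : Tendsto (fun t => ∑ i, (lam i * t + 1 + t / (lam i * t + 1))) (𝓝 0)
      (𝓝 (d : ℝ)) := by
    simpa using tendsto_finsetSum univ fun i _ =>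
      (show ContinuousAt (fun t => lam i * t + 1 + t / (lam i * t + 1)) 0 by
        fun_prop (disch := simp)).tendsto
  have hlim := ((hnum.comp tendsto_inv_atTop_zero).pow 2).div
    (hden.comp tendsto_inv_atTop_zero) (NeZero.ne _)
  exact hlim.congr' <| (eventually_gt_atTop 0).mono fun δ hδ =>
    (sq_mul_gammaMuon_sq_mul_PhiMuon hσ hl hδ).symm

end Limits

/-- In the undersampled limit `δ → ∞`:
`δ² γ_SGD² Φ_SGD → ∑ σ_i² λ_i` and `δ² γ_Muon² Φ_Muon → (∑ σ_i √λ_i)²/d`; in particular the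
limit for Muon is at most the limit for SGD. -/
theorem stmt14 (d : ℕ) (hd : 1 ≤ d)
    (σ lam : Fin d → ℝ) (hσ : ∀ i, 0 < σ i) (hlam : ∀ i, 0 < lam i) :
    Tendsto (fun δ : ℝ => δ ^ 2 * gammaSGD σ lam δ ^ 2 * PhiSGD σ lam δ) atTop
      (nhds (∑ i, σ i ^ 2 * lam i)) ∧
    Tendsto (fun δ : ℝ => δ ^ 2 * gammaMuon σ lam δ ^ 2 * PhiMuon σ lam δ) atTop
      (nhds ((∑ i, σ i * Real.sqrt (lam i)) ^ 2 / d)) ∧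
    (∑ i, σ i * Real.sqrt (lam i)) ^ 2 / d ≤ ∑ i, σ i ^ 2 * lam i := by
  have : NeZero d := ⟨by omega⟩
  refine ⟨tendsto_sq_mul_gammaSGD_sq_mul_PhiSGD (fun i => (hσ i).ne') hlam,
    tendsto_sq_mul_gammaMuon_sq_mul_PhiMuon hσ hlam, ?_⟩
  rw [div_le_iff₀' (by positivity)]
  simpa [mul_pow, sq_sqrt (hlam _).le] using
    sq_sum_le_card_mul_sum_sq (s := Finset.univ) (f := fun i => σ i * √(lam i))
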